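/- arXiv:2505.02307 — 7 statements merged into one kernel-verified Lean document; each statement's English description precedes it below -/
import Mathlib

section
/- The strings aaa and bb do not occur as substrings of any Fibonacci word F_i. -/
/-- Fibonacci words over the alphabet {a, b}, encoded with `false` = a, `true` = b:
`F 1 = b`, `F 2 = a`, `F i = F (i-1) ++ F (i-2)` for `i ≥ 3`. -/
def fibw : ℕ → List Bool
  | 0 => []
  | 1 => [true]
  | 2 => [false]
  | n + 3 => fibw (n + 2) ++ fibw (n + 1)

/-- `S` occurs in `T` at (1-based) position `p`. -/
def occursAt (S T : List Bool) (p : ℕ) : Prop :=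
  1 ≤ p ∧ S <+: T.drop (p - 1)

lemma infix_append_split {α : Type*} {l x y : List α} (h : l <:+: x ++ y) :
    l <:+: x ∨ l <:+: y ∨
      ∃ s t, s ≠ [] ∧ t ≠ [] ∧ l = s ++ t ∧ s <:+ x ∧ t <+: y := by
  obtain ⟨u, v, huv⟩ := h
  rcases le_or_gt (u.length + l.length) x.length with h1 | h1
  · left
    have hx : x.take (u.length + l.length) = u ++ l := by
      have := congrArg (List.take (u.length + l.length)) huv
      rw [List.take_append_of_le_length h1, List.append_assoc,
        List.take_length_add_append, List.take_left] at this
      exact this.symm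
    have hsuf : l <:+ x.take (u.length + l.length) := hx ▸ ⟨u, rfl⟩
    exact hsuf.isInfix.trans (x.take_prefix _).isInfix
  rcases le_or_gt x.length u.length with h2 | h2
  · right; left
    have hy : (x ++ y).drop u.length = y.drop (u.length - x.length) := by
      rw [List.drop_append, List.drop_eq_nil_of_le h2, List.nil_append]
    have hd : l ++ v = y.drop (u.length - x.length) := by
      have := congrArg (List.drop u.length) huv
      rwa [List.append_assoc, List.drop_left, hy] at this
    have hp : l <+: y.drop (u.length - x.length) := ⟨v, hd⟩
    exact hp.isInfix.trans (y.drop_suffix _).isInfix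
  · right; right
    have hk0 : 0 < x.length - u.length := by omega
    have hkl : x.length - u.length < l.length := by omega
    refine ⟨l.take (x.length - u.length), l.drop (x.length - u.length), ?_, ?_,
      (List.take_append_drop _ l).symm, ?_, ?_⟩
    · exact List.ne_nil_of_length_pos (by simp; omega)
    · exact List.ne_nil_of_length_pos (by simp; omega)
    · have hx : x = u ++ l.take (x.length - u.length) := by
        have := congrArg (List.take x.length) huv
        rw [List.append_assoc, List.take_append,
          List.take_of_length_le h2.le,
          List.take_append_of_le_length hkl.le,
          List.take_append_of_le_length (le_refl x.length), List.take_length] at this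
        exact this.symm
      exact ⟨u, hx.symm⟩
    · have hy : y = l.drop (x.length - u.length) ++ v := by
        have := congrArg (List.drop x.length) huv
        rw [List.append_assoc, List.drop_append,
          List.drop_eq_nil_of_le h2.le, List.nil_append,
          List.drop_append_of_le_length hkl.le,
          List.drop_append_of_le_length (le_refl x.length), List.drop_length,
          List.nil_append] at this
        exact this.symm
      exact hy ▸ ⟨v, rfl⟩

lemma split2 {α : Type*} {s t : List α} {a b : α} (h : s ++ t = [a, b])
    (hs : s ≠ []) (ht : t ≠ []) : s = [a] ∧ t = [b] := by
  rcases s with _ | ⟨x, _ | ⟨y, s⟩⟩ <;> simp_all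

lemma split3 {α : Type*} {s t : List α} {a b c : α} (h : s ++ t = [a, b, c])
    (hs : s ≠ []) (ht : t ≠ []) :
    (s = [a] ∧ t = [b, c]) ∨ (s = [a, b] ∧ t = [c]) := by
  rcases s with _ | ⟨x, _ | ⟨y, _ | ⟨z, s⟩⟩⟩ <;> simp_all

lemma fibw_shape : ∀ n, ∃ r, fibw (n + 3) = false :: true :: r := by
  intro n
  induction n with
  | zero => exact ⟨[], rfl⟩
  | succ m ih =>
    obtain ⟨r, hr⟩ := ih
    exact ⟨r ++ fibw (m + 2), by show fibw (m + 3) ++ fibw (m + 2) = _; rw [hr]; rfl⟩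

def P (n : ℕ) : Prop :=
  ¬ ([false, false, false] <:+: fibw n) ∧ ¬ ([true, true] <:+: fibw n) ∧
    ¬ ([false, false] <:+ fibw n)

lemma P_holds : ∀ n, P n := by
  intro n
  induction n using Nat.strong_induction_on with
  | _ n ih =>
    match n with
    | 0 => refine ⟨?_, ?_, ?_⟩ <;> decide
    | 1 => refine ⟨?_, ?_, ?_⟩ <;> decide
    | 2 => refine ⟨?_, ?_, ?_⟩ <;> decide
    | 3 => refine ⟨?_, ?_, ?_⟩ <;> decide
    | 4 => refine ⟨?_, ?_, ?_⟩ <;> decide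
    | (m + 5) =>
      have ihx := ih (m + 4) (by omega)
      have ihy := ih (m + 3) (by omega)
      obtain ⟨ry, hry⟩ := fibw_shape m
      have hsplit : fibw (m + 5) = fibw (m + 4) ++ fibw (m + 3) := rfl
      refine ⟨?_, ?_, ?_⟩
      · intro h
        rw [hsplit] at h
        rcases infix_append_split h with h | h | ⟨s, t, hs, ht, heq, hsx, hty⟩
        · exact ihx.1 h
        · exact ihy.1 h
        · rcases split3 heq.symm hs ht with ⟨hs2, ht2⟩ | ⟨hs2, ht2⟩
          · rw [ht2, hry] at hty
            rcases hty with ⟨w, hw⟩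
            simp at hw
          · exact ihx.2.2 (hs2 ▸ hsx)
      · intro h
        rw [hsplit] at h
        rcases infix_append_split h with h | h | ⟨s, t, hs, ht, heq, hsx, hty⟩
        · exact ihx.2.1 h
        · exact ihy.2.1 h
        · obtain ⟨hs2, ht2⟩ := split2 heq.symm hs ht
          rw [ht2, hry] at hty
          rcases hty with ⟨w, hw⟩
          simp at hw
      · intro h
        rw [hsplit] at h
        have hlen : (2 : ℕ) ≤ (fibw (m + 3)).length := by
          rw [hry]; simp
        have : ([false, false] : List Bool) <:+ fibw (m + 3) := by
          rw [← List.reverse_prefix] at h ⊢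
          rw [List.reverse_append] at h
          rwa [List.isPrefix_append_of_length (by simpa using hlen)] at h
        exact ihy.2.2 this

theorem no_aaa_no_bb (i : ℕ) (hi : 1 ≤ i) :
    ¬ ([false, false, false] <:+: fibw i) ∧ ¬ ([true, true] <:+: fibw i) := by
  exact ⟨(P_holds i).1, (P_holds i).2.1⟩
end

section
/- For all i ≥ 3, the word F_i occurs exactly twice as a substring of the concatenation F_i F_i (namely at positions 1 and |F_i|+1). -/
lemma fibw_length : ∀ n, (fibw n).length = Nat.fib n
  | 0 => rfl
  | 1 => rfl
  | 2 => rfl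
  | n + 3 => by
      show (fibw (n + 2) ++ fibw (n + 1)).length = _
      rw [List.length_append, fibw_length (n + 2), fibw_length (n + 1),
        Nat.fib_add_two (n := n + 1)]
      exact Nat.add_comm _ _

lemma fibw_count_true : ∀ n, (fibw (n + 2)).count true = Nat.fib n
  | 0 => rfl
  | 1 => rfl
  | n + 2 => by
      show ((fibw (n + 3) ++ fibw (n + 2)).count true) = _
      rw [List.count_append, fibw_count_true (n + 1), fibw_count_true n,
        Nat.fib_add_two]
      exact Nat.add_comm _ _

lemma fibw_count_false : ∀ n, (fibw (n + 2)).count false = Nat.fib (n + 1)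
  | 0 => rfl
  | 1 => rfl
  | n + 2 => by
      show ((fibw (n + 3) ++ fibw (n + 2)).count false) = _
      rw [List.count_append, fibw_count_false (n + 1), fibw_count_false n,
        Nat.fib_add_two (n := n + 1)]
      exact Nat.add_comm _ _

/-- Two commuting words have proportional letter counts. -/
lemma comm_count (a : Bool) :
    ∀ (N : ℕ) (u v : List Bool), u.length + v.length ≤ N → u ++ v = v ++ u →
      u.count a * v.length = v.count a * u.length := by
  intro N
  induction N with
  | zero =>
      intro u v hN h
      have : u = [] := by
        have := List.length_eq_zero_iff.mp (by omega : u.length = 0); exact this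
      subst this; simp
  | succ N ih =>
      intro u v hN h
      rcases eq_or_ne u [] with rfl | hu; · simp
      rcases eq_or_ne v [] with rfl | hv; · simp
      rcases le_total u.length v.length with hle | hle
      · -- u is a prefix of v
        have hpre : u <+: v := by
          have : u <+: v ++ u := h ▸ List.prefix_append u v
          exact List.prefix_of_prefix_length_le this (List.prefix_append v u) hle
        obtain ⟨w, rfl⟩ := hpre
        have h' : u ++ w = w ++ u :=
          List.append_cancel_left (by rw [h, List.append_assoc] : u ++ (u ++ w) = u ++ (w ++ u))
        have hup : 0 < u.length := List.length_pos_iff.mpr hu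
        have key := ih u w (by simp at hN ⊢; omega) h'
        simp only [List.count_append, List.length_append]
        ring_nf
        ring_nf at key
        linarith
      · -- v is a prefix of u
        have hpre : v <+: u := by
          have : v <+: u ++ v := h ▸ List.prefix_append v u
          exact List.prefix_of_prefix_length_le this (List.prefix_append u v) hle
        obtain ⟨w, rfl⟩ := hpre
        have h' : v ++ w = w ++ v :=
          List.append_cancel_left (by rw [h.symm, List.append_assoc] : v ++ (v ++ w) = v ++ (w ++ v))
        have hvp : 0 < v.length := List.length_pos_iff.mpr hv
        have key := ih v w (by simp at hN ⊢; omega) h'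
        simp only [List.count_append, List.length_append]
        ring_nf
        ring_nf at key
        linarith

/-- A word with coprime letter counts is not a nontrivial rotation of itself. -/
lemma no_rotate (W : List Bool) (hco : Nat.Coprime (W.count true) (W.count false))
    (k : ℕ) (hk : 0 < k) (hkn : k < W.length)
    (h : W = W.drop k ++ W.take k) : False := by
  set u := W.take k with hu
  set v := W.drop k with hv
  have hW : W = u ++ v := (List.take_append_drop k W).symm
  have hcomm : u ++ v = v ++ u := by rw [← hW, ← h]
  have hul : u.length = k := by
    rw [hu, List.length_take]; omega
  have hn : W.length = u.length + v.length := by rw [hW, List.length_append]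
  have ht := comm_count true (u.length + v.length) u v le_rfl hcomm
  have hf := comm_count false (u.length + v.length) u v le_rfl hcomm
  have hct : W.count true = u.count true + v.count true := by
    rw [hW, List.count_append]
  have hcf : W.count false = u.count false + v.count false := by
    rw [hW, List.count_append]
  -- W.length divides (count true W) * k and (count false W) * k
  have h1 : W.count true * k = u.count true * W.length := by
    rw [hct, hn, ← hul]; ring_nf; ring_nf at ht; linarith
  have h2 : W.count false * k = u.count false * W.length := by
    rw [hcf, hn, ← hul]; ring_nf; ring_nf at hf; linarith
  have d1 : W.length ∣ W.count true * k := ⟨u.count true, by linarith [h1]⟩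
  have d2 : W.length ∣ W.count false * k := ⟨u.count false, by linarith [h2]⟩
  have : W.length ∣ k := by
    have := Nat.dvd_gcd d1 d2
    rwa [Nat.gcd_mul_right, hco, one_mul] at this
  have := Nat.le_of_dvd hk this
  omega

theorem fib_in_double_fib (i : ℕ) (hi : 3 ≤ i) (p : ℕ) :
    occursAt (fibw i) (fibw i ++ fibw i) p ↔ p = 1 ∨ p = (fibw i).length + 1 := by
  obtain ⟨j, rfl⟩ : ∃ j, i = j + 3 := ⟨i - 3, by omega⟩
  set W := fibw (j + 3) with hWdef
  have hco : Nat.Coprime (W.count true) (W.count false) := by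
    rw [hWdef]
    show Nat.Coprime ((fibw ((j + 1) + 2)).count true) ((fibw ((j + 1) + 2)).count false)
    rw [fibw_count_true, fibw_count_false]
    exact Nat.fib_coprime_fib_succ (j + 1)
  have hWpos : 0 < W.length := by
    rw [hWdef, fibw_length]
    exact Nat.fib_pos.mpr (by omega)
  constructor
  · rintro ⟨hp1, hpre⟩
    set k := p - 1 with hk
    have hkle : k ≤ W.length := by
      have hlen := hpre.length_le
      rw [List.length_drop, List.length_append] at hlen
      omega
    rcases Nat.eq_zero_or_pos k with h0 | hkpos
    · left; omega
    rcases eq_or_lt_of_le hkle with heq | hlt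
    · right; omega
    exfalso
    have hdrop : (W ++ W).drop k = W.drop k ++ W := by
      rw [List.drop_append]
      congr 1
      rw [(by omega : k - W.length = 0), List.drop_zero]
    rw [hdrop] at hpre
    have hWeq : W = W.drop k ++ W.take k := by
      have hlen : W.length = (W.drop k).length + k := by
        rw [List.length_drop]; omega
      have := List.prefix_iff_eq_take.mp hpre
      rw [hlen, List.take_length_add_append] at this
      exact this
    exact no_rotate W hco k hkpos hlt hWeq
  · rintro (rfl | rfl)
    · exact ⟨le_refl 1, by simp⟩
    · refine ⟨by omega, ?_⟩
      simp only [Nat.add_sub_cancel, List.drop_left]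
      exact List.prefix_rfl
end

section
/- For all i ≥ 6, the word F_{i-2} occurs in F_i exactly at positions 1, f_{i-2}+1, and f_{i-1}+1, where f_j = |F_j|. -/
/-- The Fibonacci morphism: a ↦ ab, b ↦ a. -/
def phi : List Bool → List Bool
  | [] => []
  | false :: l => false :: true :: phi l
  | true :: l => false :: phi l

lemma phi_append (l₁ l₂ : List Bool) : phi (l₁ ++ l₂) = phi l₁ ++ phi l₂ := by
  induction l₁ with
  | nil => rfl
  | cons x l ih => cases x <;> simp [phi, ih]

lemma fibw_succ (n : ℕ) : fibw (n+3) = fibw (n+2) ++ fibw (n+1) := rfl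

lemma fibw_phi : ∀ n, fibw (n+2) = phi (fibw (n+1))
  | 0 => rfl
  | 1 => rfl
  | (n+2) => by
    show fibw (n+3) ++ fibw (n+2) = phi (fibw (n+2) ++ fibw (n+1))
    rw [phi_append, ← fibw_phi (n+1), ← fibw_phi n]

lemma false_prefix : ∀ k, [false] <+: fibw (k+2)
  | 0 => ⟨[], rfl⟩
  | 1 => ⟨[true], rfl⟩
  | (k+2) => (false_prefix (k+1)).trans ⟨fibw (k+2), rfl⟩

lemma fibw_prefix2 (k : ℕ) : fibw (k+2) <+: fibw (k+4) :=
  ⟨fibw (k+1) ++ fibw (k+2), by rw [← List.append_assoc]; rfl⟩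

lemma suffix_dicho : ∀ k, fibw 4 <:+ fibw (k+4) ∨ fibw 5 <:+ fibw (k+4)
  | 0 => Or.inl (List.suffix_refl _)
  | 1 => Or.inr (List.suffix_refl _)
  | (k+2) => (suffix_dicho k).imp (fun h => h.trans ⟨fibw (k+5), rfl⟩)
      (fun h => h.trans ⟨fibw (k+5), rfl⟩)

lemma phi_shape (l : List Bool) : phi l = [] ∨ ∃ t, phi l = false :: t := by
  match l with
  | [] => exact Or.inl rfl
  | false :: l => exact Or.inr ⟨true :: phi l, rfl⟩
  | true :: l => exact Or.inr ⟨phi l, rfl⟩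

lemma pp_shape (l : List Bool) :
    phi (phi l) = [] ∨ ∃ t, phi (phi l) = false :: true :: t := by
  match l with
  | [] => exact Or.inl rfl
  | false :: l => exact Or.inr ⟨_, rfl⟩
  | true :: l => exact Or.inr ⟨_, rfl⟩

lemma no_aaa : ∀ l, ¬ ([false, false, false] <:+: phi (phi l)) := by
  intro l
  induction l with
  | nil => simp [phi]
  | cons x l ih =>
    cases x
    · show ¬ ([false, false, false] <:+: false :: true :: false :: phi (phi l))
      rw [List.infix_cons_iff, List.infix_cons_iff, List.infix_cons_iff]
      simp only [List.cons_prefix_cons]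
      rcases pp_shape l with e | ⟨t, e⟩ <;> rw [e] <;>
        simp [ih, List.cons_prefix_cons, e ▸ ih]
    · show ¬ ([false, false, false] <:+: false :: true :: phi (phi l))
      rw [List.infix_cons_iff, List.infix_cons_iff]
      simp [ih, List.cons_prefix_cons]

lemma phi_prefix_inv : ∀ (w v : List Bool), phi w <+: phi v →
    w <+: v ∨ ∃ u, w = u ++ [true] ∧ u ++ [false] <+: v
  | [], v, _ => Or.inl List.nil_prefix
  | false :: w, [], h => by simp [phi, List.prefix_nil] at h
  | false :: w, false :: v, h => by
    have h' : phi w <+: phi v := by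
      simpa [phi, List.cons_prefix_cons] using h
    rcases phi_prefix_inv w v h' with h2 | ⟨u, rfl, h3⟩
    · exact Or.inl (List.cons_prefix_cons.2 ⟨rfl, h2⟩)
    · exact Or.inr ⟨false :: u, rfl, List.cons_prefix_cons.2 ⟨rfl, h3⟩⟩
  | false :: w, true :: v, h => by
    exfalso
    have h' : (true : Bool) :: phi w <+: phi v := by
      simpa [phi, List.cons_prefix_cons] using h
    rcases phi_shape v with e | ⟨t, e⟩ <;> rw [e] at h' <;>
      simp [List.cons_prefix_cons, List.prefix_nil] at h'
  | true :: w, [], h => by simp [phi, List.prefix_nil] at h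
  | true :: w, true :: v, h => by
    have h' : phi w <+: phi v := by
      simpa [phi, List.cons_prefix_cons] using h
    rcases phi_prefix_inv w v h' with h2 | ⟨u, rfl, h3⟩
    · exact Or.inl (List.cons_prefix_cons.2 ⟨rfl, h2⟩)
    · exact Or.inr ⟨true :: u, rfl, List.cons_prefix_cons.2 ⟨rfl, h3⟩⟩
  | true :: w, false :: v, h => by
    have h' : phi w <+: true :: phi v := by
      simpa [phi, List.cons_prefix_cons] using h
    match w with
    | [] => exact Or.inr ⟨[], rfl, ⟨v, rfl⟩⟩
    | false :: w' => exact absurd h' (by simp [phi, List.cons_prefix_cons])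
    | true :: w' => exact absurd h' (by simp [phi, List.cons_prefix_cons])

lemma phi_align : ∀ (v : List Bool) (p : ℕ) (w : List Bool),
    phi (false :: w) <+: (phi v).drop p →
    ∃ q, q ≤ v.length ∧ p = (phi (v.take q)).length ∧
      phi (false :: w) <+: phi (v.drop q)
  | [], p, w, h => by simp [phi, List.prefix_nil] at h
  | v, 0, w, h => ⟨0, Nat.zero_le _, rfl, by simpa using h⟩
  | false :: v, 1, w, h => by
    exfalso
    simp [phi, List.cons_prefix_cons] at h
  | false :: v, (p+2), w, h => by
    obtain ⟨q, hq, hp, hpre⟩ := phi_align v p w (by simpa [phi] using h)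
    refine ⟨q+1, by simpa using hq, ?_, by simpa using hpre⟩
    simp [phi, hp]
  | true :: v, (p+1), w, h => by
    obtain ⟨q, hq, hp, hpre⟩ := phi_align v p w (by simpa [phi] using h)
    refine ⟨q+1, by simpa using hq, ?_, by simpa using hpre⟩
    simp [phi, hp]

lemma take_eq_of_prefix {l₁ l₂ : List Bool} (h : l₁ <+: l₂) :
    l₂.take l₁.length = l₁ := by
  obtain ⟨t, rfl⟩ := h; exact List.take_left

lemma fibw46_prefix (k : ℕ) : fibw (k+4) <+: fibw (k+6) :=
  ⟨fibw (k+3) ++ fibw (k+4), by rw [← List.append_assoc]; rfl⟩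

lemma main_rev : ∀ k p, occursAt (fibw (k+4)) (fibw (k+6)) p →
    p = 1 ∨ p = (fibw (k+4)).length + 1 ∨ p = (fibw (k+5)).length + 1 := by
  intro k
  induction k with
  | zero =>
    rintro p ⟨h1, h2⟩
    have hlen := h2.length_le
    simp only [List.length_drop] at hlen
    have hb : p ≤ 6 := by
      have e1 : (fibw (0+4)).length = 3 := by decide
      have e2 : (fibw (0+6)).length = 8 := by decide
      omega
    interval_cases p <;> revert h2 <;> decide
  | succ k ih =>
    rintro p ⟨h1, h2⟩
    obtain ⟨w, hw⟩ : ∃ w, fibw (k+4) = false :: w := by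
      obtain ⟨t, ht⟩ := false_prefix (k+2)
      exact ⟨t, ht.symm⟩
    have hphi1 : fibw (k+5) = phi (fibw (k+4)) := fibw_phi (k+3)
    have hphi2 : fibw (k+7) = phi (fibw (k+6)) := fibw_phi (k+5)
    rw [show fibw (k+1+6) = fibw (k+7) from rfl, hphi2,
        show fibw (k+1+4) = fibw (k+5) from rfl, hphi1, hw] at h2
    obtain ⟨q, hq, hpq, hpre⟩ := phi_align _ _ _ h2
    rcases phi_prefix_inv (false :: w) _ hpre with hgood | ⟨u, hu, hbad⟩
    · have hocc : occursAt (fibw (k+4)) (fibw (k+6)) (q+1) :=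
        ⟨by omega, by simpa [hw] using hgood⟩
      rcases ih (q+1) hocc with h | h | h
      · have hq0 : q = 0 := by omega
        subst hq0
        simp [phi] at hpq
        left; omega
      · have hqv : q = (fibw (k+4)).length := by omega
        subst hqv
        rw [take_eq_of_prefix (fibw46_prefix k), ← hphi1] at hpq
        right; left
        show p = (fibw (k+5)).length + 1
        omega
      · have hqv : q = (fibw (k+5)).length := by omega
        subst hqv
        rw [take_eq_of_prefix (⟨fibw (k+4), rfl⟩ : fibw (k+5) <+: fibw (k+6)),
            ← fibw_phi (k+4), show k+4+2 = k+6 from rfl] at hpq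
        right; right
        show p = (fibw (k+6)).length + 1
        omega
    · exfalso
      have hfu : fibw (k+4) = u ++ [true] := by rw [hw, hu]
      rcases suffix_dicho k with ⟨s, hs⟩ | ⟨s, hs⟩
      · -- fibw 4 = [f,t,f] suffix, last letter conflict
        have : s ++ [false, true, false] = u ++ [true] := by
          rw [show [false, true, false] = fibw 4 from rfl, hs, hfu]
        have := congrArg List.reverse this
        simp [List.reverse_append] at this
      · -- fibw 5 = [f,t,f,f,t] suffix
        have h5 : s ++ [false, true, false, false, true] = u ++ [true] := by
          rw [show [false, true, false, false, true] = fibw 5 from rfl, hs, hfu]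
        have hu2 : u = s ++ [false, true, false, false] := by
          have hr := congrArg List.reverse h5
          simp [List.reverse_append] at hr
          have h2 := congrArg List.reverse hr
          simpa using h2.symm
        have hinf : [false, false, false] <:+: fibw (k+6) := by
          obtain ⟨t2, ht2⟩ := hbad
          refine ⟨(fibw (k+6)).take q ++ (s ++ [false, true]), t2, ?_⟩
          have : u ++ [false] = (s ++ [false, true]) ++ [false, false, false] := by
            rw [hu2]; simp
          rw [this] at ht2
          calc ((fibw (k+6)).take q ++ (s ++ [false, true])) ++ [false,false,false] ++ t2
              = (fibw (k+6)).take q ++ ((s ++ [false, true]) ++ [false,false,false] ++ t2) := by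
                simp [List.append_assoc]
            _ = (fibw (k+6)).take q ++ (fibw (k+6)).drop q := by
                rw [← ht2]
            _ = fibw (k+6) := List.take_append_drop _ _
        have : fibw (k+6) = phi (phi (fibw (k+4))) := by
          rw [← fibw_phi (k+3), ← fibw_phi (k+4)]
        rw [this] at hinf
        exact no_aaa _ hinf

theorem fib_sub2_occurrences (i : ℕ) (hi : 6 ≤ i) (p : ℕ) :
    occursAt (fibw (i - 2)) (fibw i) p ↔
      p = 1 ∨ p = (fibw (i - 2)).length + 1 ∨ p = (fibw (i - 1)).length + 1 := by
  obtain ⟨k, rfl⟩ : ∃ k, i = k + 6 := ⟨i - 6, by omega⟩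
  have e2 : k + 6 - 2 = k + 4 := by omega
  have e1 : k + 6 - 1 = k + 5 := by omega
  rw [e2, e1]
  constructor
  · exact main_rev k p
  · rintro (rfl | rfl | rfl)
    · exact ⟨le_refl 1, by simpa using fibw46_prefix k⟩
    · refine ⟨by omega, ?_⟩
      have e : (fibw (k+4)).length + 1 - 1 = (fibw (k+4)).length := by omega
      rw [e]
      have hsplit : fibw (k+6) = fibw (k+4) ++ (fibw (k+3) ++ fibw (k+4)) := by
        rw [← List.append_assoc]; rfl
      rw [hsplit, List.drop_left]
      show fibw (k+3) ++ fibw (k+2) <+: fibw (k+3) ++ fibw (k+4)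
      exact (List.prefix_append_right_inj _).2 (fibw_prefix2 k)
    · refine ⟨by omega, ?_⟩
      have e : (fibw (k+5)).length + 1 - 1 = (fibw (k+5)).length := by omega
      rw [e, show fibw (k+6) = fibw (k+5) ++ fibw (k+4) from rfl, List.drop_left]
end

section
/- For all i ≥ 7, the word F_{i-3} occurs in F_i exactly at positions 1, f_{i-3}+1, f_{i-2}+1, and f_{i-1}+1. -/
namespace FibAux

/-- The Fibonacci morphism: a ↦ ab, b ↦ a. -/
def phi : Bool → List Bool
  | true => [false]
  | false => [false, true]

def phiL : List Bool → List Bool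
  | [] => []
  | x :: t => phi x ++ phiL t

theorem phiL_append (x y : List Bool) : phiL (x ++ y) = phiL x ++ phiL y := by
  induction x with
  | nil => rfl
  | cons a t ih => simp [phiL, ih]

theorem phiL_prefix {a b : List Bool} (h : a <+: b) : phiL a <+: phiL b := by
  rcases h with ⟨c, rfl⟩
  exact ⟨phiL c, (phiL_append a c).symm⟩

theorem phiL_fibw : ∀ n : ℕ, phiL (fibw (n + 1)) = fibw (n + 2)
  | 0 => rfl
  | 1 => rfl
  | (n + 2) => by
      show phiL (fibw (n + 2) ++ fibw (n + 1)) = fibw (n + 3) ++ fibw (n + 2)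
      rw [phiL_append, phiL_fibw (n + 1), phiL_fibw n]

theorem fibw_ne_nil : ∀ n, fibw (n + 1) ≠ []
  | 0 => by simp [fibw]
  | 1 => by simp [fibw]
  | (n + 2) => by
      show fibw (n + 2) ++ fibw (n + 1) ≠ []
      simp [fibw_ne_nil (n + 1)]

theorem fibw_prefix_succ (n : ℕ) : fibw (n + 2) <+: fibw (n + 3) := ⟨fibw (n + 1), rfl⟩

theorem fibw_prefix_le : ∀ (k m : ℕ), fibw (m + 2) <+: fibw (m + 2 + k)
  | 0, m => List.prefix_refl _
  | (k + 1), m => by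
      have h1 := fibw_prefix_le k m
      have h2 : fibw (m + k + 2) <+: fibw (m + k + 3) := fibw_prefix_succ (m + k)
      have e1 : m + 2 + k = m + k + 2 := by omega
      have e2 : m + 2 + (k + 1) = m + k + 3 := by omega
      rw [← e2, ← e1] at h2
      exact h1.trans h2

theorem fibw_start (n : ℕ) : [false, true] <+: fibw (n + 3) := by
  have h := fibw_prefix_le n 1
  have e : 1 + 2 + n = n + 3 := by omega
  rw [e] at h
  exact h

theorem fibw_suffix (n : ℕ) : fibw (n + 1) <:+ fibw (n + 3) := ⟨fibw (n + 2), rfl⟩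

theorem fibw_ends : ∀ n, [false] <:+ fibw (n + 4) ∨ [false, false, true] <:+ fibw (n + 4)
  | 0 => Or.inl (by decide)
  | 1 => Or.inr (by decide)
  | (n + 2) => (fibw_ends n).imp (fun h => h.trans (fibw_suffix (n + 3)))
      (fun h => h.trans (fibw_suffix (n + 3)))

theorem fibw_ends2 : ∀ n, [false, true] <:+ fibw (n + 3) ∨ [true, false] <:+ fibw (n + 3)
  | 0 => Or.inl (by decide)
  | 1 => Or.inr (by decide)
  | (n + 2) => (fibw_ends2 n).imp (fun h => h.trans (fibw_suffix (n + 2)))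
      (fun h => h.trans (fibw_suffix (n + 2)))

theorem prefix_append_split {α : Type*} {w x y : List α} (h : w <+: x ++ y) :
    w <+: x ∨ ∃ w2, w = x ++ w2 ∧ w2 <+: y := by
  induction x generalizing w with
  | nil => exact Or.inr ⟨w, rfl, by simpa using h⟩
  | cons a x ih =>
    cases w with
    | nil => exact Or.inl (List.nil_prefix)
    | cons b w =>
      rw [List.cons_append, List.cons_prefix_cons] at h
      obtain ⟨rfl, h⟩ := h
      rcases ih h with h' | ⟨w2, rfl, h2⟩
      · exact Or.inl (List.cons_prefix_cons.mpr ⟨rfl, h'⟩)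
      · exact Or.inr ⟨w2, by simp, h2⟩

theorem infix_split {α : Type*} {w x y : List α} (h : w <:+: x ++ y) :
    w <:+: x ∨ w <:+: y ∨ ∃ w1 w2, w = w1 ++ w2 ∧ w1 ≠ [] ∧ w1 <:+ x ∧ w2 <+: y := by
  induction x generalizing w with
  | nil => exact Or.inr (Or.inl (by simpa using h))
  | cons a x ih =>
    rw [List.cons_append, List.infix_cons_iff] at h
    rcases h with h | h
    · rcases prefix_append_split (x := a :: x) h with h' | ⟨w2, rfl, h2⟩
      · exact Or.inl h'.isInfix
      · exact Or.inr (Or.inr ⟨a :: x, w2, rfl, by simp, List.suffix_refl (a :: x), h2⟩)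
    · rcases ih h with h' | h' | ⟨w1, w2, rfl, hne, hs, hp⟩
      · exact Or.inl (h'.trans (⟨[a], [], by simp⟩ : x <:+: a :: x))
      · exact Or.inr (Or.inl h')
      · exact Or.inr (Or.inr ⟨w1, w2, rfl, hne, hs.trans ⟨[a], rfl⟩, hp⟩)

theorem suffix_eq_of_length {α : Type*} {s1 s2 l : List α} (h1 : s1 <:+ l) (h2 : s2 <:+ l)
    (hl : s1.length = s2.length) : s1 = s2 := by
  rcases h1 with ⟨r1, rfl⟩
  rcases h2 with ⟨r2, h⟩
  have : r2.length = r1.length := by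
    have := congrArg List.length h
    simp at this; omega
  exact ((List.append_inj h this).2).symm

theorem prefix_eq_of_length {α : Type*} {s1 s2 l : List α} (h1 : s1 <+: l) (h2 : s2 <+: l)
    (hl : s1.length = s2.length) : s1 = s2 := by
  rcases h1 with ⟨r1, rfl⟩
  rcases h2 with ⟨r2, h⟩
  exact (List.append_inj h hl.symm).1.symm

theorem no_aaa : ∀ n, ¬ ([false, false, false] <:+: fibw n)
  | 0 => by decide
  | 1 => by decide
  | 2 => by decide
  | (n + 3) => by
      intro h
      rw [show fibw (n + 3) = fibw (n + 2) ++ fibw (n + 1) from rfl] at h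
      rcases infix_split h with h | h | ⟨w1, w2, hw, hne, hsuf, hpre⟩
      · exact no_aaa (n + 2) h
      · exact no_aaa (n + 1) h
      · -- w1 ++ w2 = [f,f,f], w1 nonempty suffix of fibw (n+2), w2 prefix of fibw (n+1)
        have hff : [false, false] <:+ fibw (n + 2) → False := by
          intro hs
          match n, hs with
          | 0, hs => exact absurd hs (by decide)
          | (k + 1), hs =>
            rcases fibw_ends2 k with h2 | h2
            · have := suffix_eq_of_length hs h2 rfl; simp at this
            · have := suffix_eq_of_length hs h2 rfl; simp at this
        match w1, hne, hw with
        | [false], _, hw =>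
          have hw2 : w2 = [false, false] := by simpa using hw.symm
          subst hw2
          match n, hpre with
          | 0, hpre => exact absurd hpre (by decide)
          | 1, hpre => exact absurd hpre (by decide)
          | (k + 2), hpre =>
            have := prefix_eq_of_length hpre (fibw_start k) rfl
            simp at this
        | [false, false], _, hw => exact hff hsuf
        | [false, false, false], _, hw => exact hff (List.IsSuffix.trans ⟨[false], rfl⟩ hsuf)

theorem phiL_shape : ∀ s : List Bool, s = [] ∨ ∃ r, phiL s = false :: r := by
  intro s
  cases s with
  | nil => exact Or.inl rfl
  | cons x t => cases x <;> exact Or.inr ⟨_, rfl⟩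

/-- Synchronization (block boundaries) for the Fibonacci morphism. -/
theorem boundary : ∀ (t : List Bool) (j : ℕ),
    ((phiL t).drop j = []) ∨ ((phiL t).drop j).head? = some true ∨
      ∃ q, j = (phiL (t.take q)).length ∧ (phiL t).drop j = phiL (t.drop q) := by
  intro t
  induction t with
  | nil => intro j; left; simp [phiL]
  | cons x t ih =>
    intro j
    cases x with
    | false =>
      match j with
      | 0 => exact Or.inr (Or.inr ⟨0, by simp [phiL], by simp⟩)
      | 1 =>
        right; left
        show (List.drop 1 (false :: true :: phiL t)).head? = some true
        simp
      | (j + 2) =>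
        have hd : (phiL (false :: t)).drop (j + 2) = (phiL t).drop j := by
          show (false :: true :: phiL t).drop (j + 2) = (phiL t).drop j
          simp
        rcases ih j with h | h | ⟨q, hq1, hq2⟩
        · left; rw [hd]; exact h
        · right; left; rw [hd]; exact h
        · right; right
          exact ⟨q + 1, by simp [phiL, phi, hq1], by rw [hd]; simpa using hq2⟩
    | true =>
      match j with
      | 0 => exact Or.inr (Or.inr ⟨0, by simp [phiL], by simp⟩)
      | (j + 1) =>
        have hd : (phiL (true :: t)).drop (j + 1) = (phiL t).drop j := by
          show (false :: phiL t).drop (j + 1) = (phiL t).drop j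
          simp
        rcases ih j with h | h | ⟨q, hq1, hq2⟩
        · left; rw [hd]; exact h
        · right; left; rw [hd]; exact h
        · right; right
          exact ⟨q + 1, by simp [phiL, phi, hq1], by rw [hd]; simpa using hq2⟩

/-- Decoding a prefix relation through the morphism. -/
theorem decode : ∀ (w s : List Bool), phiL w <+: phiL s →
    w <+: s ∨ ∃ u, w = u ++ [true] ∧ (u ++ [false]) <+: s := by
  intro w
  induction w with
  | nil => intro s _; exact Or.inl (List.nil_prefix)
  | cons x w ih =>
    intro s h
    cases s with
    | nil =>
      exfalso
      have := List.prefix_nil.mp h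
      cases x <;> simp [phiL, phi] at this
    | cons y s =>
      cases x with
      | false =>
        cases y with
        | false =>
          have h' : phiL w <+: phiL s := by
            have : phi false ++ phiL w <+: phi false ++ phiL s := h
            exact (List.prefix_append_right_inj _).mp this
          rcases ih s h' with h'' | ⟨u, rfl, hu⟩
          · exact Or.inl (List.cons_prefix_cons.mpr ⟨rfl, h''⟩)
          · exact Or.inr ⟨false :: u, rfl, List.cons_prefix_cons.mpr ⟨rfl, hu⟩⟩
        | true =>
          exfalso
          have h' : true :: phiL w <+: phiL s := by
            have : false :: true :: phiL w <+: false :: phiL s := h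
            exact (List.cons_prefix_cons.mp this).2
          rcases phiL_shape s with rfl | ⟨r, hr⟩
          · simpa [phiL] using List.prefix_nil.mp h'
          · rw [hr] at h'
            have := (List.cons_prefix_cons.mp h').1
            simp at this
      | true =>
        cases y with
        | false =>
          have h' : phiL w <+: true :: phiL s := by
            have : false :: phiL w <+: false :: true :: phiL s := h
            exact (List.cons_prefix_cons.mp this).2
          cases w with
          | nil =>
            exact Or.inr ⟨[], rfl, List.cons_prefix_cons.mpr ⟨rfl, List.nil_prefix⟩⟩
          | cons z w' =>
            exfalso
            have hz : ∃ r, phiL (z :: w') = false :: r := by cases z <;> exact ⟨_, rfl⟩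
            rcases hz with ⟨r, hr⟩
            rw [hr] at h'
            have := (List.cons_prefix_cons.mp h').1
            simp at this
        | true =>
          have h' : phiL w <+: phiL s := by
            have : phi true ++ phiL w <+: phi true ++ phiL s := h
            exact (List.prefix_append_right_inj _).mp this
          rcases ih s h' with h'' | ⟨u, rfl, hu⟩
          · exact Or.inl (List.cons_prefix_cons.mpr ⟨rfl, h''⟩)
          · exact Or.inr ⟨true :: u, rfl, List.cons_prefix_cons.mpr ⟨rfl, hu⟩⟩

theorem occ_phi {w t : List Bool} {q : ℕ} (h : w <+: t.drop q) :
    phiL w <+: (phiL t).drop (phiL (t.take q)).length := by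
  have hsplit : phiL t = phiL (t.take q) ++ phiL (t.drop q) := by
    rw [← phiL_append, List.take_append_drop]
  rw [hsplit, List.drop_left]
  exact phiL_prefix h

theorem main_lemma : ∀ n, 4 ≤ n → ∀ p, occursAt (fibw n) (fibw (n + 3)) p ↔
    (p = 1 ∨ p = (fibw n).length + 1 ∨ p = (fibw (n + 1)).length + 1 ∨
      p = (fibw (n + 2)).length + 1) := by
  intro n hn
  induction n, hn using Nat.le_induction with
  | base =>
    intro p
    have l4 : (fibw 4).length = 3 := by decide
    have l5 : (fibw 5).length = 5 := by decide
    have l6 : (fibw 6).length = 8 := by decide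
    have l7 : (fibw 7).length = 13 := by decide
    rw [l4, l5, l6]
    constructor
    · rintro ⟨h1, h2⟩
      have hl := h2.length_le
      rw [List.length_drop, l4, l7] at hl
      have hp : p ≤ 11 := by omega
      interval_cases p <;> revert h2 <;> decide
    · rintro (rfl | rfl | rfl | rfl) <;> exact ⟨by norm_num, by decide⟩
  | succ n hn ih =>
    obtain ⟨m, rfl⟩ : ∃ m, n = m + 4 := ⟨n - 4, by omega⟩
    have ih' : ∀ p, occursAt (fibw (m + 4)) (fibw (m + 7)) p ↔
        (p = 1 ∨ p = (fibw (m + 4)).length + 1 ∨ p = (fibw (m + 5)).length + 1 ∨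
          p = (fibw (m + 6)).length + 1) := fun p => ih p
    intro p
    show occursAt (fibw (m + 5)) (fibw (m + 8)) p ↔
      (p = 1 ∨ p = (fibw (m + 5)).length + 1 ∨ p = (fibw (m + 6)).length + 1 ∨
        p = (fibw (m + 7)).length + 1)
    constructor
    · rintro ⟨h1, h2⟩
      rw [show fibw (m + 8) = phiL (fibw (m + 7)) from (phiL_fibw (m + 6)).symm] at h2
      rcases boundary (fibw (m + 7)) (p - 1) with hemp | hhd | ⟨q, hq, hdrop⟩
      · rw [hemp] at h2
        exact absurd (List.prefix_nil.mp h2) (fibw_ne_nil (m + 4))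
      · exfalso
        rcases fibw_start (m + 2) with ⟨r, hr⟩
        rcases h2 with ⟨c, hc⟩
        rw [← hc, ← hr] at hhd
        simp at hhd
      · rw [hdrop, ← phiL_fibw (m + 3)] at h2
        rcases decode _ _ h2 with hws | ⟨u, hu, hu2⟩
        · have hocc : occursAt (fibw (m + 4)) (fibw (m + 7)) (q + 1) :=
            ⟨Nat.le_add_left _ _, by simpa using hws⟩
          have hQ := (ih' (q + 1)).mp hocc
          have hp1 : p = (p - 1) + 1 := by omega
          rcases hQ with hQ | hQ | hQ | hQ
          · have hq0 : q = 0 := by omega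
            subst hq0
            left
            rw [hp1, hq]
            simp [phiL]
          · have hq0 : q = (fibw (m + 4)).length := by omega
            subst hq0
            right; left
            have hpre : fibw (m + 4) <+: fibw (m + 7) := by
              have := fibw_prefix_le 3 (m + 2)
              simpa [show m + 2 + 2 + 3 = m + 7 by omega, show m + 2 + 2 = m + 4 by omega]
                using this
            have htake : (fibw (m + 7)).take (fibw (m + 4)).length = fibw (m + 4) :=
              (List.prefix_iff_eq_take.mp hpre).symm
            rw [hp1, hq, htake, phiL_fibw (m + 3)]
          · have hq0 : q = (fibw (m + 5)).length := by omega
            subst hq0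
            right; right; left
            have hpre : fibw (m + 5) <+: fibw (m + 7) := by
              have := fibw_prefix_le 2 (m + 3)
              simpa [show m + 3 + 2 + 2 = m + 7 by omega, show m + 3 + 2 = m + 5 by omega]
                using this
            have htake : (fibw (m + 7)).take (fibw (m + 5)).length = fibw (m + 5) :=
              (List.prefix_iff_eq_take.mp hpre).symm
            rw [hp1, hq, htake, phiL_fibw (m + 4)]
          · have hq0 : q = (fibw (m + 6)).length := by omega
            subst hq0
            right; right; right
            have hpre : fibw (m + 6) <+: fibw (m + 7) := fibw_prefix_succ (m + 4)
            have htake : (fibw (m + 7)).take (fibw (m + 6)).length = fibw (m + 6) :=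
              (List.prefix_iff_eq_take.mp hpre).symm
            rw [hp1, hq, htake, phiL_fibw (m + 5)]
        · exfalso
          rcases fibw_ends m with ⟨r, hr⟩ | ⟨r, hr⟩
          · have : r ++ [false] = u ++ [true] := hr.trans hu
            have := (List.append_inj' this rfl).2
            simp at this
          · have hru : (r ++ [false, false]) ++ [true] = u ++ [true] := by
              rw [List.append_assoc]; exact hr.trans hu
            have hu' : u = r ++ [false, false] := ((List.append_inj' hru rfl).1).symm
            have hsuf3 : [false, false, false] <:+ u ++ [false] :=
              ⟨r, by rw [hu']; simp⟩
            have hinf : [false, false, false] <:+: fibw (m + 7) :=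
              hsuf3.isInfix.trans (hu2.isInfix.trans (List.drop_suffix q _).isInfix)
            exact no_aaa (m + 7) hinf
    · have key : ∀ q : ℕ, q + 2 ≤ m + 7 →
          occursAt (fibw (m + 4)) (fibw (m + 7)) ((fibw (q + 2)).length + 1) →
          fibw (q + 2) <+: fibw (m + 7) →
          occursAt (fibw (m + 5)) (fibw (m + 8)) ((fibw (q + 3)).length + 1) := by
        intro q hq hocc hpre
        obtain ⟨h1, h2⟩ := hocc
        simp only [Nat.add_sub_cancel] at h2
        constructor
        · omega
        · simp only [Nat.add_sub_cancel]
          have htake : (fibw (m + 7)).take (fibw (q + 2)).length = fibw (q + 2) :=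
            (List.prefix_iff_eq_take.mp hpre).symm
          have := occ_phi (t := fibw (m + 7)) (q := (fibw (q + 2)).length) h2
          rw [htake, phiL_fibw (q + 1), phiL_fibw (m + 3), phiL_fibw (m + 6)] at this
          exact this
      rintro (rfl | rfl | rfl | rfl)
      · refine ⟨le_refl 1, ?_⟩
        simp only [Nat.sub_self, List.drop_zero]
        have := fibw_prefix_le 3 (m + 3)
        simpa [show m + 3 + 2 + 3 = m + 8 by omega, show m + 3 + 2 = m + 5 by omega]
          using this
      · have hpre : fibw (m + 4) <+: fibw (m + 7) := by
          have := fibw_prefix_le 3 (m + 2)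
          simpa [show m + 2 + 2 + 3 = m + 7 by omega, show m + 2 + 2 = m + 4 by omega]
            using this
        have hocc := (ih' ((fibw (m + 4)).length + 1)).mpr (Or.inr (Or.inl rfl))
        exact key (m + 2) (by omega) hocc hpre
      · have hpre : fibw (m + 5) <+: fibw (m + 7) := by
          have := fibw_prefix_le 2 (m + 3)
          simpa [show m + 3 + 2 + 2 = m + 7 by omega, show m + 3 + 2 = m + 5 by omega]
            using this
        have hocc := (ih' ((fibw (m + 5)).length + 1)).mpr (Or.inr (Or.inr (Or.inl rfl)))
        exact key (m + 3) (by omega) hocc hpre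
      · have hpre : fibw (m + 6) <+: fibw (m + 7) := fibw_prefix_succ (m + 4)
        have hocc := (ih' ((fibw (m + 6)).length + 1)).mpr (Or.inr (Or.inr (Or.inr rfl)))
        exact key (m + 4) (by omega) hocc hpre

end FibAux

theorem fib_sub3_occurrences (i : ℕ) (hi : 7 ≤ i) (p : ℕ) :
    occursAt (fibw (i - 3)) (fibw i) p ↔
      p = 1 ∨ p = (fibw (i - 3)).length + 1 ∨ p = (fibw (i - 2)).length + 1 ∨
        p = (fibw (i - 1)).length + 1 := by
  obtain ⟨k, rfl⟩ : ∃ k, i = k + 7 := ⟨i - 7, by omega⟩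
  have h3 : k + 7 - 3 = (k + 4) := by omega
  have h2 : k + 7 - 2 = (k + 4) + 1 := by omega
  have h1 : k + 7 - 1 = (k + 4) + 2 := by omega
  have h0 : k + 7 = (k + 4) + 3 := by omega
  rw [h3, h2, h1, h0]
  exact FibAux.main_lemma (k + 4) (by omega) p
end

section
/- For all i ≥ 7, defining Q_i = F_{i-5} F_{i-6} ⋯ F_3 F_2, Δ(0) = ba and Δ(1) = ab, one has F_{i-4} F_{i-5} = Q_i Δ(1 - (i mod 2)) and F_{i-5} F_{i-4} = Q_i Δ(i mod 2). -/
/-- `Q i = F (i-5) F (i-6) ⋯ F 3 F 2`. -/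
def Qw (i : ℕ) : List Bool :=
  ((List.range (i - 6)).map (fun k => fibw (i - 5 - k))).flatten

/-- `Δ 0 = ba`, `Δ 1 = ab`. -/
def Δw (n : ℕ) : List Bool := if n = 0 then [true, false] else [false, true]

def Rw (n : ℕ) : List Bool :=
  ((List.range (n - 1)).map (fun k => fibw (n - k))).flatten

lemma Rw_succ (n : ℕ) (hn : 1 ≤ n) : Rw (n + 1) = fibw (n + 1) ++ Rw n := by
  obtain ⟨m, rfl⟩ : ∃ m, n = m + 1 := ⟨n - 1, by omega⟩
  simp only [Rw, Nat.add_sub_cancel, List.range_succ_eq_map, List.map_cons, List.map_map,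
    List.flatten_cons, Nat.sub_zero]
  congr 1
  congr 1
  refine List.map_congr_left fun k _ => ?_
  simp only [Function.comp]
  congr 1
  omega

lemma key (n : ℕ) (hn : 2 ≤ n) :
    fibw (n + 1) ++ fibw n = Rw n ++ Δw (n % 2) ∧
    fibw n ++ fibw (n + 1) = Rw n ++ Δw ((n + 1) % 2) := by
  induction n, hn using Nat.le_induction with
  | base => constructor <;> decide
  | succ n hn ih =>
    obtain ⟨m, rfl⟩ : ∃ m, n = m + 2 := ⟨n - 2, by omega⟩
    rw [Rw_succ _ (by omega)]
    constructor
    · show fibw (m + 1 + 3) ++ _ = _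
      rw [show fibw (m + 1 + 3) = fibw (m + 3) ++ fibw (m + 2) from rfl,
        List.append_assoc, ih.2, List.append_assoc]
    · have ih1 : fibw (m + 3) ++ fibw (m + 2) = Rw (m + 2) ++ Δw ((m + 2) % 2) := ih.1
      show _ ++ fibw (m + 1 + 3) = _
      rw [show fibw (m + 1 + 3) = fibw (m + 3) ++ fibw (m + 2) from rfl,
        show (m + 2 + 1 + 1) % 2 = (m + 2) % 2 from by omega,
        ← List.append_assoc]
      show fibw (m + 3) ++ _ ++ _ = _
      rw [List.append_assoc, ih1, List.append_assoc]

theorem q_i_delta (i : ℕ) (hi : 7 ≤ i) :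
    fibw (i - 4) ++ fibw (i - 5) = Qw i ++ Δw (1 - i % 2) ∧
    fibw (i - 5) ++ fibw (i - 4) = Qw i ++ Δw (i % 2) := by
  obtain ⟨n, rfl⟩ : ∃ n, i = n + 7 := ⟨i - 7, by omega⟩
  have hQ : Qw (n + 7) = Rw (n + 2) := by
    simp only [Qw, Rw]
    congr 1
  have h := key (n + 2) (by omega)
  rw [show n + 7 - 4 = n + 3 from by omega, show n + 7 - 5 = n + 2 from by omega, hQ,
    show 1 - (n + 7) % 2 = (n + 2) % 2 from by omega,
    show (n + 7) % 2 = (n + 2 + 1) % 2 from by omega]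
  exact h
end

section
/- For all i ≥ 7, every occurrence of F_{i-3} in F_i is immediately followed by the string Q_{i-1} = F_{i-6} F_{i-7} ⋯ F_3 F_2; equivalently, whenever F_{i-3} occurs at position p in F_i then F_{i-3} Q_{i-1} occurs at position p. -/
instance (S T : List Bool) (p : ℕ) : Decidable (occursAt S T p) := by
  unfold occursAt; infer_instance

lemma fibw_append (n : ℕ) : fibw (n + 3) = fibw (n + 2) ++ fibw (n + 1) := rfl

lemma len_rec (n : ℕ) : (fibw (n+3)).length = (fibw (n+2)).length + (fibw (n+1)).length := by
  rw [fibw_append, List.length_append]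

lemma len_pos : ∀ n, 1 ≤ (fibw (n+1)).length
  | 0 => by decide
  | 1 => by decide
  | n+2 => by
    have h1 : 1 ≤ (fibw (n+2)).length := len_pos (n+1)
    have h2 := len_rec n
    show 1 ≤ (fibw (n+3)).length
    omega

lemma fibw_ne_nil (n : ℕ) : fibw (n+1) ≠ [] := by
  have := len_pos n
  intro h; rw [h] at this; simp at this

lemma prefix_append_of_le {S A B : List Bool} (h : S <+: A ++ B) (hl : S.length ≤ A.length) :
    S <+: A := by
  have h1 : S = (A ++ B).take S.length := List.prefix_iff_eq_take.mp h
  rw [List.take_append, Nat.sub_eq_zero_of_le hl, List.take_zero,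
    List.append_nil] at h1
  rw [h1]; exact List.take_prefix _ _

lemma prefix_eq_left {S A B : List Bool} (h : S <+: A ++ B) (hl : S.length = A.length) :
    S = A :=
  (prefix_append_of_le h hl.le).eq_of_length hl

lemma occ_length {S T : List Bool} {p : ℕ} (h : occursAt S T p) (hS : S ≠ []) :
    p - 1 + S.length ≤ T.length := by
  obtain ⟨h1, t, ht⟩ := h
  have hlen := congrArg List.length ht
  simp only [List.length_append, List.length_drop] at hlen
  have hS1 : 1 ≤ S.length := List.length_pos_iff.mpr hS
  omega

lemma occ_prefix {S' S T : List Bool} {p : ℕ} (hp : S' <+: S) (h : occursAt S T p) :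
    occursAt S' T p :=
  ⟨h.1, hp.trans h.2⟩

lemma occ_append_left {S A B : List Bool} {p : ℕ} (h : occursAt S (A ++ B) p)
    (hb : p - 1 + S.length ≤ A.length) : occursAt S A p := by
  refine ⟨h.1, ?_⟩
  have h2 := h.2
  rw [List.drop_append] at h2
  refine prefix_append_of_le h2 ?_
  rw [List.length_drop]; omega

lemma occ_append_right {S A B : List Bool} {p : ℕ} (h : occursAt S (A ++ B) p)
    (hb : A.length + 1 ≤ p) : occursAt S B (p - A.length) := by
  refine ⟨by omega, ?_⟩
  have h2 := h.2
  rw [List.drop_append, List.drop_eq_nil_of_le (by omega),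
    List.nil_append] at h2
  have e : p - A.length - 1 = p - 1 - A.length := by omega
  rw [e]; exact h2

lemma occ_drop {S T : List Bool} {k p : ℕ} (h : occursAt S T p) (hk : k + 1 ≤ p) :
    occursAt S (T.drop k) (p - k) := by
  refine ⟨by omega, ?_⟩
  rw [List.drop_drop]
  have e : k + (p - k - 1) = p - 1 := by omega
  rw [e]; exact h.2

lemma swap2 : ∀ n, ∃ w x y, x ≠ y ∧ fibw (n+2) ++ fibw (n+1) = w ++ [x, y] ∧
    fibw (n+1) ++ fibw (n+2) = w ++ [y, x]
  | 0 => ⟨[], false, true, by decide, by decide, by decide⟩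
  | n+1 => by
    obtain ⟨w, x, y, hxy, h1, h2⟩ := swap2 n
    refine ⟨fibw (n+2) ++ w, y, x, hxy.symm, ?_, ?_⟩
    · show fibw (n+3) ++ fibw (n+2) = _
      rw [fibw_append n, List.append_assoc, h2]
      simp [List.append_assoc]
    · show fibw (n+2) ++ fibw (n+3) = _
      rw [fibw_append n, h1]
      simp [List.append_assoc]

lemma fibw_neq (n : ℕ) : fibw (n+2) ++ fibw (n+1) ≠ fibw (n+1) ++ fibw (n+2) := by
  obtain ⟨w, x, y, hxy, h1, h2⟩ := swap2 n
  rw [h1, h2]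
  intro h
  have := (List.append_inj h rfl).2
  simp at this
  exact hxy this.1

lemma Qw_step (m : ℕ) : Qw (m + 7) = fibw (m + 2) ++ Qw (m + 6) := by
  unfold Qw
  rw [show m + 7 - 6 = m + 1 from by omega, show m + 6 - 6 = m from by omega,
    List.range_succ_eq_map, List.map_cons, List.flatten_cons, List.map_map]
  have hmap : List.map ((fun k => fibw (m + 7 - 5 - k)) ∘ Nat.succ) (List.range m)
      = List.map (fun k => fibw (m + 6 - 5 - k)) (List.range m) := by
    apply List.map_congr_left
    intro k _
    show fibw (m + 7 - 5 - (k+1)) = fibw (m + 6 - 5 - k)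
    have e : m + 7 - 5 - (k+1) = m + 6 - 5 - k := by omega
    rw [e]
  rw [hmap]
  show fibw (m + 7 - 5 - 0) ++ _ = _
  have e0 : m + 7 - 5 - 0 = m + 2 := by omega
  rw [e0]

lemma Qfib : ∀ m, ∃ x y, fibw (m + 3) = Qw (m + 6) ++ [x, y]
  | 0 => ⟨false, true, by decide⟩
  | m+1 => by
    obtain ⟨x, y, ih⟩ := Qfib m
    obtain ⟨w, x₀, y₀, hxy, h1, h2⟩ := swap2 (m+1)
    -- h1 : fibw (m+3) ++ fibw (m+2) = w ++ [x₀,y₀]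
    -- h2 : fibw (m+2) ++ fibw (m+3) = w ++ [y₀,x₀]
    have hI : fibw (m+2) ++ fibw (m+3) = (fibw (m+2) ++ Qw (m+6)) ++ [x, y] := by
      rw [ih]; simp [List.append_assoc]
    have e := h2.symm.trans hI
    obtain ⟨ew, exy⟩ := List.append_inj' e rfl
    have hx : y₀ = x ∧ x₀ = y := by simpa using exy
    refine ⟨y, x, ?_⟩
    show fibw (m+4) = Qw (m+7) ++ [y, x]
    rw [Qw_step m, fibw_append (m+1), h1, ew, hx.1, hx.2]


def Estmt (m : ℕ) : Prop := ∀ p, occursAt (fibw m) (fibw (m+1)) p → p = 1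

def Hstmt (m : ℕ) : Prop := ∀ p, occursAt (fibw (m+1)) (fibw m ++ fibw (m+1)) p →
  p = 1 ∨ p = (fibw m).length + 1

def Kstmt (m : ℕ) : Prop := ∀ p,
  occursAt (fibw (m+2)) (fibw m ++ (fibw (m+1) ++ fibw (m+2))) p →
  p = (fibw m).length + 1 ∨ p = (fibw (m+2)).length + 1

def Xstmt (m : ℕ) : Prop := ∀ p, occursAt (fibw m) (fibw m ++ fibw m) p →
  p = 1 ∨ p = (fibw m).length + 1

lemma occ_forall_of_bounded {S T : List Bool} (hS : S ≠ []) {P : ℕ → Prop}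
    (h : ∀ p, p ≤ T.length → occursAt S T p → P p) : ∀ p, occursAt S T p → P p := by
  intro p hp
  have h1 := occ_length hp hS
  have h2 : 1 ≤ S.length := List.length_pos_iff.mpr hS
  exact h p (by omega) hp

-- A-lemma: occurrences of F (n+5) in F (n+7)
lemma Astep (n : ℕ) (hE : Estmt (n+5)) (hK : Kstmt (n+3)) :
    ∀ p, occursAt (fibw (n+5)) (fibw (n+7)) p →
      p = 1 ∨ p = (fibw (n+5)).length + 1 ∨ p = (fibw (n+6)).length + 1 := by
  intro p h
  have e43 : (fibw (n+4)).length = (fibw (n+3)).length + (fibw (n+2)).length := len_rec (n+1)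
  have e54 : (fibw (n+5)).length = (fibw (n+4)).length + (fibw (n+3)).length := len_rec (n+2)
  have e65 : (fibw (n+6)).length = (fibw (n+5)).length + (fibw (n+4)).length := len_rec (n+3)
  have e76 : (fibw (n+7)).length = (fibw (n+6)).length + (fibw (n+5)).length := len_rec (n+4)
  have q3 : 1 ≤ (fibw (n+3)).length := len_pos (n+2)
  have q4 : 1 ≤ (fibw (n+4)).length := len_pos (n+3)
  have br : (fibw (n+3+2)).length = (fibw (n+5)).length := rfl
  have hb : p - 1 + (fibw (n+5)).length ≤ (fibw (n+7)).length :=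
    occ_length h (fibw_ne_nil (n+4))
  by_cases hc : p - 1 + (fibw (n+5)).length ≤ (fibw (n+6)).length
  · left
    have e7 : fibw (n+7) = fibw (n+6) ++ fibw (n+5) := fibw_append (n+4)
    rw [e7] at h
    exact hE p (occ_append_left h hc)
  · have e7 : fibw (n+7) = fibw (n+4) ++ (fibw (n+3) ++ (fibw (n+4) ++ fibw (n+5))) := by
      have a1 : fibw (n+7) = fibw (n+6) ++ fibw (n+5) := fibw_append (n+4)
      have a2 : fibw (n+6) = fibw (n+5) ++ fibw (n+4) := fibw_append (n+3)
      have a3 : fibw (n+5) = fibw (n+4) ++ fibw (n+3) := fibw_append (n+2)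
      rw [a1, a2, a3]
      simp [List.append_assoc]
    rw [e7] at h
    have h' := occ_drop h (by omega : (fibw (n+4)).length + 1 ≤ p)
    rw [List.drop_left] at h'
    rcases hK _ h' with hq | hq
    · right; left; omega
    · right; right; omega

lemma Estep (n : ℕ) (hE : Estmt (n+5)) (hK : Kstmt (n+3)) : Estmt (n+6) := by
  intro p h
  have e54 : (fibw (n+5)).length = (fibw (n+4)).length + (fibw (n+3)).length := len_rec (n+2)
  have e65 : (fibw (n+6)).length = (fibw (n+5)).length + (fibw (n+4)).length := len_rec (n+3)
  have e76 : (fibw (n+7)).length = (fibw (n+6)).length + (fibw (n+5)).length := len_rec (n+4)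
  have q3 : 1 ≤ (fibw (n+3)).length := len_pos (n+2)
  have q4 : 1 ≤ (fibw (n+4)).length := len_pos (n+3)
  have hb : p - 1 + (fibw (n+6)).length ≤ (fibw (n+7)).length :=
    occ_length h (fibw_ne_nil (n+5))
  have hpre : fibw (n+5) <+: fibw (n+6) := ⟨fibw (n+4), (fibw_append (n+3)).symm⟩
  have h' := occ_prefix hpre h
  rcases Astep n hE hK p h' with h1 | h1 | h1
  · exact h1
  · exfalso
    have hd := occ_drop h (by omega : (fibw (n+5)).length + 1 ≤ p)
    have e7 : fibw (n+7) = fibw (n+5) ++ (fibw (n+4) ++ fibw (n+5)) := by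
      have a1 : fibw (n+7) = fibw (n+6) ++ fibw (n+5) := fibw_append (n+4)
      have a2 : fibw (n+6) = fibw (n+5) ++ fibw (n+4) := fibw_append (n+3)
      rw [a1, a2, List.append_assoc]
    rw [e7, List.drop_left] at hd
    have hq1 : p - (fibw (n+5)).length = 1 := by omega
    rw [hq1] at hd
    have h2 := hd.2
    simp only [Nat.sub_self, List.drop_zero] at h2
    have heq : fibw (n+6) = fibw (n+4) ++ fibw (n+5) :=
      h2.eq_of_length (by simp only [List.length_append]; omega)
    have a2 : fibw (n+6) = fibw (n+5) ++ fibw (n+4) := fibw_append (n+3)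
    exact fibw_neq (n+3) (a2.symm.trans heq)
  · exfalso; omega

lemma Hstep (n : ℕ) (hX : Xstmt (n+5)) : Hstmt (n+5) := by
  intro p h
  have e65 : (fibw (n+6)).length = (fibw (n+5)).length + (fibw (n+4)).length := len_rec (n+3)
  have q4 : 1 ≤ (fibw (n+4)).length := len_pos (n+3)
  have q5 : 1 ≤ (fibw (n+5)).length := len_pos (n+4)
  have hb : p - 1 + (fibw (n+6)).length ≤ (fibw (n+5) ++ fibw (n+6)).length :=
    occ_length h (fibw_ne_nil (n+5))
  simp only [List.length_append] at hb
  by_cases hp : p = (fibw (n+5)).length + 1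
  · right; exact hp
  · left
    have hple : p ≤ (fibw (n+5)).length := by omega
    have h' := occ_prefix (⟨fibw (n+4), (fibw_append (n+3)).symm⟩ :
      fibw (n+5) <+: fibw (n+6)) h
    have e : fibw (n+5) ++ fibw (n+6) = (fibw (n+5) ++ fibw (n+5)) ++ fibw (n+4) := by
      have a2 : fibw (n+6) = fibw (n+5) ++ fibw (n+4) := fibw_append (n+3)
      rw [a2, List.append_assoc]
    rw [e] at h'
    have h'' := occ_append_left h' (by simp only [List.length_append]; omega)
    rcases hX p h'' with h1 | h1
    · exact h1
    · exfalso; omega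

lemma Kstep (n : ℕ) (hH : Hstmt (n+4)) (hX : Xstmt (n+5)) : Kstmt (n+4) := by
  intro p h
  have e54 : (fibw (n+5)).length = (fibw (n+4)).length + (fibw (n+3)).length := len_rec (n+2)
  have e65 : (fibw (n+6)).length = (fibw (n+5)).length + (fibw (n+4)).length := len_rec (n+3)
  have q3 : 1 ≤ (fibw (n+3)).length := len_pos (n+2)
  have q4 : 1 ≤ (fibw (n+4)).length := len_pos (n+3)
  have br : (fibw (n+4+2)).length = (fibw (n+6)).length := rfl
  have br2 : (fibw (n+4+1)).length = (fibw (n+5)).length := rfl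
  have hb : p - 1 + (fibw (n+6)).length ≤
      (fibw (n+4) ++ (fibw (n+5) ++ fibw (n+6))).length :=
    occ_length h (fibw_ne_nil (n+5))
  simp only [List.length_append] at hb
  by_cases hp : p = (fibw (n+6)).length + 1
  · right; omega
  · left
    have hple : p ≤ (fibw (n+6)).length := by have := h.1; omega
    have h' := occ_prefix (⟨fibw (n+4), (fibw_append (n+3)).symm⟩ :
      fibw (n+5) <+: fibw (n+6)) h
    by_cases hc : p ≤ (fibw (n+4)).length + 1
    · have e : fibw (n+4) ++ (fibw (n+5) ++ fibw (n+6))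
          = (fibw (n+4) ++ fibw (n+5)) ++ fibw (n+6) := by
        rw [List.append_assoc]
      rw [e] at h'
      have h'' := occ_append_left h' (by simp only [List.length_append]; omega)
      rcases hH p h'' with h1 | h1
      · exfalso
        have h2 := h.2
        rw [h1] at h2
        simp only [Nat.sub_self, List.drop_zero] at h2
        rw [e] at h2
        have heq : fibw (n+6) = fibw (n+4) ++ fibw (n+5) :=
          prefix_eq_left h2 (by simp only [List.length_append]; omega)
        have a2 : fibw (n+6) = fibw (n+5) ++ fibw (n+4) := fibw_append (n+3)
        exact fibw_neq (n+3) (a2.symm.trans heq)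
      · omega
    · exfalso
      have hd := occ_drop h' (by omega : (fibw (n+4)).length + 1 ≤ p)
      rw [List.drop_left] at hd
      have e : fibw (n+5) ++ fibw (n+6) = (fibw (n+5) ++ fibw (n+5)) ++ fibw (n+4) := by
        have a2 : fibw (n+6) = fibw (n+5) ++ fibw (n+4) := fibw_append (n+3)
        rw [a2, List.append_assoc]
      rw [e] at hd
      have hd' := occ_append_left hd (by simp only [List.length_append]; omega)
      rcases hX _ hd' with h1 | h1 <;> omega

lemma Xstep (n : ℕ) (hE : Estmt (n+5)) (hK : Kstmt (n+3)) : Xstmt (n+6) := by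
  intro p h
  have e54 : (fibw (n+5)).length = (fibw (n+4)).length + (fibw (n+3)).length := len_rec (n+2)
  have e65 : (fibw (n+6)).length = (fibw (n+5)).length + (fibw (n+4)).length := len_rec (n+3)
  have q3 : 1 ≤ (fibw (n+3)).length := len_pos (n+2)
  have q4 : 1 ≤ (fibw (n+4)).length := len_pos (n+3)
  have br : (fibw (n+3+2)).length = (fibw (n+5)).length := rfl
  have hb : p - 1 + (fibw (n+6)).length ≤ (fibw (n+6) ++ fibw (n+6)).length :=
    occ_length h (fibw_ne_nil (n+5))
  simp only [List.length_append] at hb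
  by_cases hp1 : p = 1
  · left; exact hp1
  by_cases hp2 : p = (fibw (n+6)).length + 1
  · right; exact hp2
  exfalso
  have hple : 2 ≤ p ∧ p ≤ (fibw (n+6)).length := by have := h.1; omega
  have h' := occ_prefix (⟨fibw (n+4), (fibw_append (n+3)).symm⟩ :
    fibw (n+5) <+: fibw (n+6)) h
  by_cases hc : p ≤ (fibw (n+4)).length + 1
  · have h'' := occ_append_left h' (by omega)
    exact hp1 (hE p h'')
  · have hd := occ_drop h' (by omega : (fibw (n+4)).length + 1 ≤ p)
    have e : fibw (n+6) ++ fibw (n+6)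
        = fibw (n+4) ++ ((fibw (n+3) ++ (fibw (n+4) ++ fibw (n+5))) ++ fibw (n+4)) := by
      have a2 : fibw (n+6) = fibw (n+5) ++ fibw (n+4) := fibw_append (n+3)
      have a3 : fibw (n+5) = fibw (n+4) ++ fibw (n+3) := fibw_append (n+2)
      rw [a2, a3]
      simp [List.append_assoc]
    rw [e, List.drop_left] at hd
    have hd' := occ_append_left hd (by simp only [List.length_append]; omega)
    rcases hK _ hd' with h1 | h1
    · -- p = len(n+5)+1
      have hpval : p = (fibw (n+5)).length + 1 := by omega
      have hd2 := occ_drop h (by omega : (fibw (n+5)).length + 1 ≤ p)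
      have e2 : fibw (n+6) ++ fibw (n+6)
          = fibw (n+5) ++ ((fibw (n+4) ++ fibw (n+5)) ++ fibw (n+4)) := by
        have a2 : fibw (n+6) = fibw (n+5) ++ fibw (n+4) := fibw_append (n+3)
        rw [a2]
        simp [List.append_assoc]
      rw [e2, List.drop_left] at hd2
      have hq1 : p - (fibw (n+5)).length = 1 := by omega
      rw [hq1] at hd2
      have h2 := hd2.2
      simp only [Nat.sub_self, List.drop_zero] at h2
      have heq : fibw (n+6) = fibw (n+4) ++ fibw (n+5) :=
        prefix_eq_left h2 (by simp only [List.length_append]; omega)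
      have a2 : fibw (n+6) = fibw (n+5) ++ fibw (n+4) := fibw_append (n+3)
      exact fibw_neq (n+3) (a2.symm.trans heq)
    · omega

lemma big : ∀ n, Estmt (n+5) ∧ Hstmt (n+4) ∧ Kstmt (n+3) ∧ Xstmt (n+5)
  | 0 => by
    refine ⟨?_, ?_, ?_, ?_⟩
    · exact occ_forall_of_bounded (by decide) (by decide)
    · exact occ_forall_of_bounded (by decide) (by decide)
    · exact occ_forall_of_bounded (by decide) (by decide)
    · exact occ_forall_of_bounded (by decide) (by decide)
  | n+1 => by
    obtain ⟨hE, hH, hK, hX⟩ := big n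
    exact ⟨Estep n hE hK, Hstep n hX, Kstep n hH hX, Xstep n hE hK⟩

lemma Blem (n : ℕ) : ∀ p, occursAt (fibw (n+5)) (fibw (n+8)) p →
    p = 1 ∨ p = (fibw (n+5)).length + 1 ∨ p = (fibw (n+6)).length + 1 ∨
      p = (fibw (n+7)).length + 1 := by
  obtain ⟨hE, hH, hK, hX⟩ := big n
  intro p h
  have e54 : (fibw (n+5)).length = (fibw (n+4)).length + (fibw (n+3)).length := len_rec (n+2)
  have e65 : (fibw (n+6)).length = (fibw (n+5)).length + (fibw (n+4)).length := len_rec (n+3)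
  have e76 : (fibw (n+7)).length = (fibw (n+6)).length + (fibw (n+5)).length := len_rec (n+4)
  have e87 : (fibw (n+8)).length = (fibw (n+7)).length + (fibw (n+6)).length := len_rec (n+5)
  have q3 : 1 ≤ (fibw (n+3)).length := len_pos (n+2)
  have q4 : 1 ≤ (fibw (n+4)).length := len_pos (n+3)
  have q5 : 1 ≤ (fibw (n+5)).length := len_pos (n+4)
  have hb : p - 1 + (fibw (n+5)).length ≤ (fibw (n+8)).length :=
    occ_length h (fibw_ne_nil (n+4))
  have e8 : fibw (n+8) = fibw (n+7) ++ fibw (n+6) := fibw_append (n+5)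
  by_cases hc : p - 1 + (fibw (n+5)).length ≤ (fibw (n+7)).length
  · have h2 := h
    rw [e8] at h2
    have h' := occ_append_left h2 hc
    rcases Astep n hE hK p h' with h1 | h1 | h1
    · exact Or.inl h1
    · exact Or.inr (Or.inl h1)
    · exact Or.inr (Or.inr (Or.inl h1))
  · by_cases hc2 : (fibw (n+7)).length + 1 ≤ p
    · have h2 := h
      rw [e8] at h2
      have h' := occ_append_right h2 hc2
      have h1 := hE _ h'
      right; right; right; omega
    · exfalso
      have hd := occ_drop h (by omega : (fibw (n+6)).length + 1 ≤ p)
      have e : fibw (n+8) = fibw (n+6) ++ ((fibw (n+5) ++ fibw (n+5)) ++ fibw (n+4)) := by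
        have a1 : fibw (n+8) = fibw (n+7) ++ fibw (n+6) := fibw_append (n+5)
        have a2 : fibw (n+7) = fibw (n+6) ++ fibw (n+5) := fibw_append (n+4)
        have a3 : fibw (n+6) = fibw (n+5) ++ fibw (n+4) := fibw_append (n+3)
        rw [a1, a2, a3]
        simp [List.append_assoc]
      rw [e, List.drop_left] at hd
      have hd' := occ_append_left hd (by simp only [List.length_append]; omega)
      rcases hX _ hd' with h1 | h1 <;> omega

theorem fib_sub3_followed_by_q (i : ℕ) (hi : 7 ≤ i) (p : ℕ)
    (h : occursAt (fibw (i - 3)) (fibw i) p) :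
    occursAt (fibw (i - 3) ++ Qw (i - 1)) (fibw i) p := by
  rcases eq_or_lt_of_le hi with h7 | h8
  · -- i = 7 : Qw 6 = []
    cases h7
    simpa [show Qw 6 = [] from rfl] using h
  · obtain ⟨n, rfl⟩ : ∃ n, i = n + 8 := ⟨i - 8, by omega⟩
    have d3 : n + 8 - 3 = n + 5 := by omega
    have d1 : n + 8 - 1 = n + 7 := by omega
    rw [d3] at h ⊢
    rw [d1]
    -- h : occursAt (fibw (n+5)) (fibw (n+8)) p
    -- ⊢ occursAt (fibw (n+5) ++ Qw (n+7)) (fibw (n+8)) p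
    obtain ⟨x, y, hq⟩ := Qfib (n+1)
    have hq' : fibw (n+4) = Qw (n+7) ++ [x, y] := hq
    have hC : (fibw (n+5) ++ Qw (n+7)) ++ [x, y] = fibw (n+6) := by
      have a2 : fibw (n+6) = fibw (n+5) ++ fibw (n+4) := fibw_append (n+3)
      rw [a2, hq', List.append_assoc]
    have hCpre : fibw (n+5) ++ Qw (n+7) <+: fibw (n+6) := ⟨[x, y], hC⟩
    rcases Blem n p h with h1 | h1 | h1 | h1
    · -- p = 1
      subst h1
      refine ⟨le_refl 1, ?_⟩
      simp only [Nat.sub_self, List.drop_zero]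
      have e : fibw (n+8) = fibw (n+6) ++ (fibw (n+5) ++ fibw (n+6)) := by
        have a1 : fibw (n+8) = fibw (n+7) ++ fibw (n+6) := fibw_append (n+5)
        have a2 : fibw (n+7) = fibw (n+6) ++ fibw (n+5) := fibw_append (n+4)
        rw [a1, a2, List.append_assoc]
      rw [e]
      exact hCpre.trans (List.prefix_append _ _)
    · -- p = len(n+5)+1
      refine ⟨by omega, ?_⟩
      rw [h1, Nat.add_sub_cancel]
      have e : fibw (n+8) = fibw (n+5) ++ (fibw (n+4) ++ (fibw (n+5) ++ fibw (n+6))) := by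
        have a1 : fibw (n+8) = fibw (n+7) ++ fibw (n+6) := fibw_append (n+5)
        have a2 : fibw (n+7) = fibw (n+6) ++ fibw (n+5) := fibw_append (n+4)
        have a3 : fibw (n+6) = fibw (n+5) ++ fibw (n+4) := fibw_append (n+3)
        rw [a1, a2, a3]
        simp [List.append_assoc]
      rw [e, List.drop_left]
      obtain ⟨w, x₀, y₀, hxy, hs1, hs2⟩ := swap2 (n+3)
      -- hs1 : fibw (n+5) ++ fibw (n+4) = w ++ [x₀,y₀]
      -- hs2 : fibw (n+4) ++ fibw (n+5) = w ++ [y₀,x₀]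
      have a2 : fibw (n+6) = fibw (n+5) ++ fibw (n+4) := fibw_append (n+3)
      have ew : w ++ [x₀, y₀] = (fibw (n+5) ++ Qw (n+7)) ++ [x, y] := by
        rw [← hs1, ← a2, ← hC]
      obtain ⟨hw, hxy2⟩ := List.append_inj' ew rfl
      have hx0 : x₀ = x ∧ y₀ = y := by simpa using hxy2
      have hpre2 : fibw (n+5) ++ Qw (n+7) <+: fibw (n+4) ++ fibw (n+5) := by
        rw [hs2, hw]
        exact ⟨[y, x], by rw [hx0.1, hx0.2]⟩
      rw [← List.append_assoc]
      exact hpre2.trans (List.prefix_append _ _)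
    · -- p = len(n+6)+1
      refine ⟨by omega, ?_⟩
      rw [h1, Nat.add_sub_cancel]
      have e : fibw (n+8) = fibw (n+6) ++ (fibw (n+5) ++ fibw (n+6)) := by
        have a1 : fibw (n+8) = fibw (n+7) ++ fibw (n+6) := fibw_append (n+5)
        have a2 : fibw (n+7) = fibw (n+6) ++ fibw (n+5) := fibw_append (n+4)
        rw [a1, a2, List.append_assoc]
      rw [e, List.drop_left]
      have hQ6 : Qw (n+7) <+: fibw (n+6) := by
        have hQ4 : Qw (n+7) <+: fibw (n+4) := ⟨[x, y], hq'.symm⟩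
        have h46 : fibw (n+4) <+: fibw (n+6) := by
          have a2 : fibw (n+6) = fibw (n+5) ++ fibw (n+4) := fibw_append (n+3)
          have a3 : fibw (n+5) = fibw (n+4) ++ fibw (n+3) := fibw_append (n+2)
          refine ⟨fibw (n+3) ++ fibw (n+4), ?_⟩
          rw [a2, a3]
          simp [List.append_assoc]
        exact hQ4.trans h46
      exact (List.prefix_append_right_inj (fibw (n+5))).mpr hQ6
    · -- p = len(n+7)+1
      refine ⟨by omega, ?_⟩
      rw [h1, Nat.add_sub_cancel]
      have e : fibw (n+8) = fibw (n+7) ++ fibw (n+6) := fibw_append (n+5)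
      rw [e, List.drop_left]
      exact hCpre
end

section
/- For every i ≥ 5: T_i = T_{i-2} complement(T_{i-3}) T_{i-2} T_{i-3} T_{i-2}, and T_i = T_{i-3} complement(T_{i-4}) T_{i-4} complement(T_{i-3}) T_{i-2} T_{i-4} complement(T_{i-3}) complement(T_{i-4}) complement(T_{i-3}). -/
/-- Thue-Morse words over the alphabet {a, b}, encoded with `false` = a, `true` = b:
`T 1 = a` and `T i = T (i-1) ++ complement (T (i-1))` for `i ≥ 2`, where the
complement swaps the two letters. -/
def tmw : ℕ → List Bool
  | 0 => []
  | 1 => [false]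
  | n + 2 => tmw (n + 1) ++ (tmw (n + 1)).map (fun c => !c)

/-- Complement: swap each a with b and vice versa. -/
def comp (S : List Bool) : List Bool := S.map (fun c => !c)

theorem tm_two_factorizations (i : ℕ) (hi : 5 ≤ i) :
    tmw i = tmw (i - 2) ++ comp (tmw (i - 3)) ++ tmw (i - 2) ++ tmw (i - 3) ++ tmw (i - 2) ∧
    tmw i = tmw (i - 3) ++ comp (tmw (i - 4)) ++ tmw (i - 4) ++ comp (tmw (i - 3)) ++
      tmw (i - 2) ++ tmw (i - 4) ++ comp (tmw (i - 3)) ++ comp (tmw (i - 4)) ++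
      comp (tmw (i - 3)) := by
  obtain ⟨j, rfl⟩ : ∃ j, i = j + 5 := ⟨i - 5, by omega⟩
  have e2 : ∀ n, tmw (n + 2) = tmw (n + 1) ++ comp (tmw (n + 1)) := fun n => rfl
  have h5 : j + 5 = (j + 3) + 2 := by omega
  constructor <;>
  · rw [h5, e2, show j + 3 = (j+1)+2 from rfl, e2, e2]
    simp only [show j+5-2 = (j+1)+2 from rfl, show j+5-3 = j+2 from rfl,
      show j+5-4 = j+1 from rfl, e2, comp, List.map_append, List.map_map,
      List.append_assoc]
    simp [Function.comp_def, Bool.not_not]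
end
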